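/- The conditional expectation η_n satisfies |η_n| ≤ ∑_{i=n}^{N} (E[H_i^2 | F_{n-1}])^{1/2} · δ_n^{1/2} almost surely; in particular η_n is finite a.s. and η_n^2/δ_n ≤ (N-n+1) ∑_{i=n}^{N} E[H_i^2 | F_{n-1}]. -/

import Mathlib

open MeasureTheory Finset

/-!
Write the integrand of `η_n` as `∑ᵢ Hᵢ Yᵢ` with `Yᵢ = ωᵢ ΔSₙ ∏ⱼ (1 - βⱼ ΔSⱼ)`. Since `ωᵢ² ≤ ωᵢ`,
every `Yᵢ²` is dominated by `ΔSₙ² Dₙ`, whose conditional expectation is `δₙ`; conditional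
Cauchy–Schwarz applied to each term gives the first bound, and Cauchy–Schwarz for the finite sum
`∑ᵢ √E[Hᵢ² | ℱₙ₋₁]` the second. Conditional Cauchy–Schwarz itself follows from
`E[(qX + Y)² | m] ≥ 0`, which holds a.e. simultaneously for all rational `q`, by the discriminant
of the resulting quadratic in `q`.
-/

/-- `A_n = ∑_{i=n}^N ω_i ∏_{j=n+1}^i (1 - β_j ΔS_j)`. -/
def Aproc {Ω : Type*} (N : ℕ) (w β ΔS : ℕ → Ω → ℝ) (n : ℕ) (x : Ω) : ℝ :=
  ∑ i ∈ Finset.Icc n N, w i x * ∏ j ∈ Finset.Icc (n + 1) i, (1 - β j x * ΔS j x)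

/-- `D_n = ∑_{i=n}^N ω_i ∏_{j=n+1}^i (1 - β_j ΔS_j)²`. -/
def Dproc {Ω : Type*} (N : ℕ) (w β ΔS : ℕ → Ω → ℝ) (n : ℕ) (x : Ω) : ℝ :=
  ∑ i ∈ Finset.Icc n N, w i x * ∏ j ∈ Finset.Icc (n + 1) i, (1 - β j x * ΔS j x) ^ 2

theorem sq_le_mul_of_forall_rat_quadratic_nonneg {a b c : ℝ}
    (h : ∀ q : ℚ, 0 ≤ a * (q * q) + 2 * c * q + b) : c ^ 2 ≤ a * b := by
  have hreal : ∀ t : ℝ, 0 ≤ a * (t * t) + 2 * c * t + b := fun t =>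
    Rat.denseRange_cast.induction_on t
      (isClosed_le continuous_const (by fun_prop)) h
  have hdiscrim := discrim_le_zero hreal
  rw [discrim] at hdiscrim
  linarith

theorem sq_mul_le_sum_mul_sq {ι : Type*} {s : Finset ι} {w p : ι → ℝ} {i : ι}
    (hw : ∀ k ∈ s, w k ∈ Set.Icc (0 : ℝ) 1) (hi : i ∈ s) :
    (w i * p i) ^ 2 ≤ ∑ k ∈ s, w k * p k ^ 2 :=
  calc (w i * p i) ^ 2 = w i * w i * p i ^ 2 := by ring
    _ ≤ w i * p i ^ 2 := by
      gcongr
      exact mul_le_of_le_one_right (hw i hi).1 (hw i hi).2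
    _ ≤ ∑ k ∈ s, w k * p k ^ 2 :=
      single_le_sum (fun k hk => mul_nonneg (hw k hk).1 (sq_nonneg _)) hi

theorem sq_sum_sqrt_le_card_mul_sum {ι : Type*} (s : Finset ι) {a : ι → ℝ}
    (ha : ∀ i ∈ s, 0 ≤ a i) : (∑ i ∈ s, √(a i)) ^ 2 ≤ #s * ∑ i ∈ s, a i :=
  calc (∑ i ∈ s, √(a i)) ^ 2 ≤ #s * ∑ i ∈ s, √(a i) ^ 2 := sq_sum_le_card_mul_sum_sq
    _ = #s * ∑ i ∈ s, a i := by rw [sum_congr rfl fun i hi => Real.sq_sqrt (ha i hi)]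

theorem sq_div_le_of_abs_le_mul_sqrt {η s δ C : ℝ} (h : |η| ≤ s * √δ) (hδ : 0 ≤ δ)
    (hC : s ^ 2 ≤ C) : η ^ 2 / δ ≤ C := by
  rcases hδ.eq_or_lt with rfl | hpos
  · rw [div_zero]
    exact (sq_nonneg s).trans hC
  rw [div_le_iff₀ hpos]
  calc η ^ 2 = |η| ^ 2 := (sq_abs η).symm
    _ ≤ (s * √δ) ^ 2 := pow_le_pow_left₀ (abs_nonneg η) h 2
    _ = s ^ 2 * δ := by rw [mul_pow, Real.sq_sqrt hδ]
    _ ≤ C * δ := by gcongr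

theorem natCast_card_Icc {n N : ℕ} (h : n ≤ N + 1) : (#(Icc n N) : ℝ) = N - n + 1 := by
  rw [Nat.card_Icc, Nat.cast_sub h]
  push_cast
  ring

theorem Dproc_nonneg {Ω : Type*} {N : ℕ} {w β ΔS : ℕ → Ω → ℝ} (hw : ∀ k x, 0 ≤ w k x)
    (n : ℕ) (x : Ω) : 0 ≤ Dproc N w β ΔS n x :=
  sum_nonneg fun i _ => mul_nonneg (hw i x) (prod_nonneg fun _ _ => sq_nonneg _)

theorem sq_weight_mul_prod_le_sq_mul_Dproc {Ω : Type*} {N n i : ℕ} {w β ΔS : ℕ → Ω → ℝ}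
    (hw : ∀ k x, w k x ∈ Set.Icc (0 : ℝ) 1) (hi : i ∈ Icc n N) (x : Ω) :
    (w i x * (ΔS n x * ∏ j ∈ Icc (n + 1) i, (1 - β j x * ΔS j x))) ^ 2 ≤
      ΔS n x ^ 2 * Dproc N w β ΔS n x := by
  have hDproc : ΔS n x ^ 2 * Dproc N w β ΔS n x = ∑ k ∈ Icc n N,
      w k x * (ΔS n x * ∏ j ∈ Icc (n + 1) k, (1 - β j x * ΔS j x)) ^ 2 := by
    rw [Dproc, mul_sum]
    refine sum_congr rfl fun k _ => ?_
    rw [mul_pow, ← prod_pow]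
    ring
  rw [hDproc]
  exact sq_mul_le_sum_mul_sq (p := fun k => ΔS n x * ∏ j ∈ Icc (n + 1) k, (1 - β j x * ΔS j x))
    (fun k _ => hw k x) hi

section ConditionalCauchySchwarz

variable {Ω : Type*} {m m0 : MeasurableSpace Ω} {μ : Measure Ω}

theorem aestronglyMeasurable_of_ae_eq_condExp {E : Type*} [NormedAddCommGroup E]
    [NormedSpace ℝ E] [CompleteSpace E] {f g : Ω → E} (hm : m ≤ m0) (h : f =ᵐ[μ] μ[g | m]) :
    AEStronglyMeasurable f μ :=
  (stronglyMeasurable_condExp.mono hm).aestronglyMeasurable.congr h.symm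

theorem abs_condExp_mul_le_sqrt_mul_sqrt {X Y : Ω → ℝ} (hX : MemLp X 2 μ) (hY : MemLp Y 2 μ) :
    ∀ᵐ x ∂μ, |μ[fun y => X y * Y y | m] x| ≤
      √(μ[fun y => X y ^ 2 | m] x) * √(μ[fun y => Y y ^ 2 | m] x) := by
  have hX2 : Integrable (fun y => X y ^ 2) μ := hX.integrable_sq
  have hY2 : Integrable (fun y => Y y ^ 2) μ := hY.integrable_sq
  have hXY : Integrable (fun y => X y * Y y) μ := hX.integrable_mul hY
  have hquad : ∀ q : ℚ, ∀ᵐ x ∂μ, 0 ≤ μ[fun y => X y ^ 2 | m] x * (q * q)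
      + 2 * μ[fun y => X y * Y y | m] x * q + μ[fun y => Y y ^ 2 | m] x := by
    intro q
    have hexpand : (fun y => ((q : ℝ) * X y + Y y) ^ 2) = ((q : ℝ) * q) • (fun y => X y ^ 2)
        + (2 * (q : ℝ)) • (fun y => X y * Y y) + fun y => Y y ^ 2 := by
      funext y
      simp only [Pi.add_apply, Pi.smul_apply, smul_eq_mul]
      ring
    filter_upwards [condExp_nonneg (m := m) (ae_of_all μ fun y => sq_nonneg (q * X y + Y y)),
      condExp_add ((hX2.smul ((q : ℝ) * q)).add (hXY.smul (2 * (q : ℝ)))) hY2 m,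
      condExp_add (hX2.smul ((q : ℝ) * q)) (hXY.smul (2 * (q : ℝ))) m,
      condExp_smul ((q : ℝ) * q) (fun y => X y ^ 2) m,
      condExp_smul (2 * (q : ℝ)) (fun y => X y * Y y) m] with x hnonneg h1 h2 h3 h4
    rw [hexpand, Pi.zero_apply, h1, Pi.add_apply, h2, Pi.add_apply, h3, h4] at hnonneg
    simp only [Pi.smul_apply, smul_eq_mul] at hnonneg
    linarith
  filter_upwards [ae_all_iff.2 hquad,
    condExp_nonneg (m := m) (ae_of_all μ fun y => sq_nonneg (X y))] with x hx hX0
  rw [← Real.sqrt_mul hX0]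
  exact Real.abs_le_sqrt (sq_le_mul_of_forall_rat_quadratic_nonneg hx)

theorem abs_condExp_sum_mul_le {ι : Type*} {s : Finset ι} {X Y : ι → Ω → ℝ} {Z : Ω → ℝ}
    (hX : ∀ i ∈ s, MemLp (X i) 2 μ) (hY : ∀ i ∈ s, AEStronglyMeasurable (Y i) μ)
    (hZ : Integrable Z μ) (hYZ : ∀ i ∈ s, ∀ x, Y i x ^ 2 ≤ Z x) :
    ∀ᵐ x ∂μ, |μ[fun y => ∑ i ∈ s, X i y * Y i y | m] x| ≤
      (∑ i ∈ s, √(μ[fun y => X i y ^ 2 | m] x)) * √(μ[Z | m] x) := by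
  have hY2 : ∀ i ∈ s, Integrable (fun y => Y i y ^ 2) μ := fun i hi =>
    hZ.mono' ((hY i hi).pow 2) (ae_of_all μ fun x => by
      simpa only [Real.norm_eq_abs, abs_pow, sq_abs] using hYZ i hi x)
  have hYL2 : ∀ i ∈ s, MemLp (Y i) 2 μ := fun i hi =>
    (memLp_two_iff_integrable_sq (hY i hi)).2 (hY2 i hi)
  have hsum : μ[fun y => ∑ i ∈ s, X i y * Y i y | m] =ᵐ[μ]
      ∑ i ∈ s, μ[fun y => X i y * Y i y | m] := by
    rw [← Finset.sum_fn]
    exact condExp_finsetSum (fun i hi => (hX i hi).integrable_mul (hYL2 i hi)) m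
  have hterm : ∀ i ∈ s, ∀ᵐ x ∂μ, |μ[fun y => X i y * Y i y | m] x| ≤
      √(μ[fun y => X i y ^ 2 | m] x) * √(μ[Z | m] x) := fun i hi => by
    filter_upwards [abs_condExp_mul_le_sqrt_mul_sqrt (m := m) (hX i hi) (hYL2 i hi),
      condExp_mono (m := m) (hY2 i hi) hZ (ae_of_all μ (hYZ i hi))] with x hCS hmono
    exact hCS.trans (by gcongr)
  filter_upwards [hsum, (Filter.eventually_all_finset s).2 hterm] with x hx hterm
  rw [hx, Finset.sum_apply, Finset.sum_mul]
  exact (abs_sum_le_sum_abs _ _).trans (sum_le_sum hterm)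

end ConditionalCauchySchwarz

theorem stmt_7_general {Ω : Type*} {m0 : MeasurableSpace Ω} (μ : Measure Ω)
    (N : ℕ) (ℱ : Filtration ℕ m0) (ΔS w : ℕ → Ω → ℝ) (αp δp β : ℕ → Ω → ℝ)
    (hw : ∀ n x, w n x ∈ Set.Icc (0 : ℝ) 1)
    (hwa : ∀ n, StronglyMeasurable[ℱ n] (w n))
    (hSa : ∀ n, StronglyMeasurable[ℱ n] (ΔS n))
    (hβ : ∀ n x, β n x = αp n x / δp n x)
    (hα : ∀ n ∈ Finset.Icc 1 N,
      αp n =ᵐ[μ] μ[fun x => ΔS n x * Aproc N w β ΔS n x | ℱ (n - 1)])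
    (hδ : ∀ n ∈ Finset.Icc 1 N,
      δp n =ᵐ[μ] μ[fun x => ΔS n x ^ 2 * Dproc N w β ΔS n x | ℱ (n - 1)])
    (hSDint : ∀ n, Integrable (fun x => ΔS n x ^ 2 * Dproc N w β ΔS n x) μ)
    (H : ℕ → Ω → ℝ) (ηp : ℕ → Ω → ℝ)
    (hH : ∀ n, MemLp (H n) 2 μ)
    (hη : ∀ n ∈ Finset.Icc 1 N,
      ηp n =ᵐ[μ] μ[fun x => ΔS n x *
        ∑ i ∈ Finset.Icc n N, H i x * w i x *
          ∏ j ∈ Finset.Icc (n + 1) i, (1 - β j x * ΔS j x) | ℱ (n - 1)]) :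
    ∀ n ∈ Finset.Icc 1 N,
      ∀ᵐ x ∂μ,
        |ηp n x| ≤ (∑ i ∈ Finset.Icc n N,
            Real.sqrt ((μ[fun y => H i y ^ 2 | ℱ (n - 1)]) x)) * Real.sqrt (δp n x) ∧
        ηp n x ^ 2 / δp n x
          ≤ ((N : ℝ) - n + 1) * ∑ i ∈ Finset.Icc n N, (μ[fun y => H i y ^ 2 | ℱ (n - 1)]) x := by
  intro n hn
  set Y : ℕ → Ω → ℝ := fun i x => w i x * (ΔS n x * ∏ j ∈ Icc (n + 1) i, (1 - β j x * ΔS j x))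
  have hS_meas : ∀ j, AEStronglyMeasurable (ΔS j) μ := fun j =>
    ((hSa j).mono (ℱ.le j)).aestronglyMeasurable
  have hβ_meas : ∀ j ∈ Icc 1 N, AEStronglyMeasurable (β j) μ := fun j hj => by
    rw [show β j = αp j / δp j from funext (hβ j)]
    exact (aestronglyMeasurable_of_ae_eq_condExp (ℱ.le _) (hα j hj)).div₀
      (aestronglyMeasurable_of_ae_eq_condExp (ℱ.le _) (hδ j hj))
  have hY_meas : ∀ i ∈ Icc n N, AEStronglyMeasurable (Y i) μ := fun i hi =>
    ((hwa i).mono (ℱ.le i)).aestronglyMeasurable.mul <| (hS_meas n).mul <|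
      Finset.aestronglyMeasurable_fun_prod _ fun j hj => aestronglyMeasurable_const.sub <|
        (hβ_meas j (by simp only [mem_Icc] at hn hi hj ⊢; omega)).mul (hS_meas j)
  have hη_sum : ηp n =ᵐ[μ] μ[fun x => ∑ i ∈ Icc n N, H i x * Y i x | ℱ (n - 1)] := by
    refine (hη n hn).trans (Filter.EventuallyEq.of_eq (congrArg _ (funext fun x => ?_)))
    rw [mul_sum]
    exact sum_congr rfl fun i _ => by ring
  filter_upwards [hη_sum, hδ n hn, abs_condExp_sum_mul_le (fun i _ => hH i) hY_meas (hSDint n)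
      fun i hi => sq_weight_mul_prod_le_sq_mul_Dproc hw hi,
    condExp_nonneg (m := ℱ (n - 1)) (ae_of_all μ fun x =>
      mul_nonneg (sq_nonneg (ΔS n x)) (Dproc_nonneg (fun k x => (hw k x).1) n x)),
    (Filter.eventually_all_finset (Icc n N)).2 fun i _ =>
      condExp_nonneg (m := ℱ (n - 1)) (f := fun y => H i y ^ 2)
        (ae_of_all μ fun y => sq_nonneg (H i y))]
    with x hηx hδx hbound hδ0 hH0
  rw [hηx, hδx, ← natCast_card_Icc (by simp only [mem_Icc] at hn; omega)]
  exact ⟨hbound, sq_div_le_of_abs_le_mul_sqrt hbound hδ0 (sq_sum_sqrt_le_card_mul_sum _ hH0)⟩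

/-- Bound on `η_n = E[ΔS_n ∑_{i=n}^N H_i ω_i ∏_{j=n+1}^i (1 - β_j ΔS_j) | F_{n-1}]`:
`|η_n| ≤ ∑_{i=n}^N (E[H_i² | F_{n-1}])^{1/2} δ_n^{1/2}` a.s., and
`η_n² / δ_n ≤ (N - n + 1) ∑_{i=n}^N E[H_i² | F_{n-1}]` a.s. -/
theorem stmt_7 {Ω : Type*} {m0 : MeasurableSpace Ω} (μ : Measure Ω) [IsProbabilityMeasure μ]
    (N : ℕ) (ℱ : Filtration ℕ m0) (ΔS w : ℕ → Ω → ℝ) (αp δp β : ℕ → Ω → ℝ)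
    (hw : ∀ n x, w n x ∈ Set.Icc (0 : ℝ) 1)
    (hwa : ∀ n, StronglyMeasurable[ℱ n] (w n))
    (hSa : ∀ n, StronglyMeasurable[ℱ n] (ΔS n))
    (hSloc : ∀ n, Integrable (fun x => ΔS n x ^ 2) μ)
    (hβ : ∀ n x, β n x = αp n x / δp n x)
    (hβ0 : ∀ x, β 0 x = 0)
    (hα : ∀ n ∈ Finset.Icc 1 N,
      αp n =ᵐ[μ] μ[fun x => ΔS n x * Aproc N w β ΔS n x | ℱ (n - 1)])
    (hδ : ∀ n ∈ Finset.Icc 1 N,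
      δp n =ᵐ[μ] μ[fun x => ΔS n x ^ 2 * Dproc N w β ΔS n x | ℱ (n - 1)])
    (hAint : ∀ n, Integrable (Aproc N w β ΔS n) μ)
    (hDint : ∀ n, Integrable (Dproc N w β ΔS n) μ)
    (hSAint : ∀ n, Integrable (fun x => ΔS n x * Aproc N w β ΔS n x) μ)
    (hSDint : ∀ n, Integrable (fun x => ΔS n x ^ 2 * Dproc N w β ΔS n x) μ)
    (H : ℕ → Ω → ℝ) (ηp : ℕ → Ω → ℝ)
    (hH : ∀ n, MemLp (H n) 2 μ)
    (hHa : ∀ n, StronglyMeasurable[ℱ n] (H n))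
    (hη : ∀ n ∈ Finset.Icc 1 N,
      ηp n =ᵐ[μ] μ[fun x => ΔS n x *
        ∑ i ∈ Finset.Icc n N, H i x * w i x *
          ∏ j ∈ Finset.Icc (n + 1) i, (1 - β j x * ΔS j x) | ℱ (n - 1)])
    (hηint : ∀ n, Integrable (fun x => ΔS n x *
        ∑ i ∈ Finset.Icc n N, H i x * w i x *
          ∏ j ∈ Finset.Icc (n + 1) i, (1 - β j x * ΔS j x)) μ) :
    ∀ n ∈ Finset.Icc 1 N,
      ∀ᵐ x ∂μ,
        |ηp n x| ≤ (∑ i ∈ Finset.Icc n N,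
            Real.sqrt ((μ[fun y => H i y ^ 2 | ℱ (n - 1)]) x)) * Real.sqrt (δp n x) ∧
        ηp n x ^ 2 / δp n x
          ≤ ((N : ℝ) - n + 1) * ∑ i ∈ Finset.Icc n N, (μ[fun y => H i y ^ 2 | ℱ (n - 1)]) x :=
  stmt_7_general μ N ℱ ΔS w αp δp β hw hwa hSa hβ hα hδ hSDint H ηp hH hη
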